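/- Let q ≥ 2 be a real number, u : ℝ³ → ℝ³ continuously differentiable with compact support, and φ : ℝ³ → ℝ twice continuously differentiable; set σ := ∇φ. Then: ∫_{ℝ³} ∇(u·σ)·σ |σ|^{q−2} dx = ∫_{ℝ³} ( Σ_{j,k} (∂_j u_k) σ_k σ_j ) |σ|^{q−2} dx − (1/q) ∫_{ℝ³} |σ|^q div u dx. -/

import Mathlib

/-!
Write `σ = ∇φ`. By the product rule and the symmetry `∂_j σ_k = ∂_k σ_j` of the Hessian,
`∇(u·σ)·σ = Σ_{j,k} (∂_j u_k) σ_k σ_j + Σ_k u_k Σ_j σ_j ∂_k σ_j`, and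
`|σ|^{q-2} Σ_j σ_j ∂_k σ_j = (1/q) ∂_k |σ|^q`, where `|σ|^q` is `C¹` because `q > 1`.
So the difference of the two sides is `(1/q) ∫ (u·∇|σ|^q + |σ|^q div u) = (1/q) ∫ div (|σ|^q u)`,
which vanishes by integration by parts since `u` has compact support.
-/

open MeasureTheory

/-- Spatial partial derivative `∂_i f` of a scalar field on `ℝ³`. -/
noncomputable def pd (i : Fin 3) (f : (Fin 3 → ℝ) → ℝ) (x : Fin 3 → ℝ) : ℝ :=
  fderiv ℝ f x (Pi.single i 1)

theorem integral_mul_fderiv_eq_neg_of_hasCompactSupport {E : Type*} [NormedAddCommGroup E]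
    [NormedSpace ℝ E] [FiniteDimensional ℝ E] [MeasurableSpace E] [BorelSpace E]
    {μ : Measure E} [μ.IsAddHaarMeasure] {f g : E → ℝ}
    (hf : ContDiff ℝ 1 f) (hg : ContDiff ℝ 1 g) (hgs : HasCompactSupport g) (v : E) :
    ∫ x, g x * fderiv ℝ f x v ∂μ = -∫ x, fderiv ℝ g x v * f x ∂μ := by
  have hf' : Continuous fun x => fderiv ℝ f x v := by fun_prop
  have hg' : Continuous fun x => fderiv ℝ g x v := by fun_prop
  refine integral_mul_fderiv_eq_neg_fderiv_mul_of_integrable ?_ ?_ ?_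
    (fun x _ => hg.differentiable one_ne_zero x) (fun x _ => hf.differentiable one_ne_zero x)
  · exact (hg'.mul hf.continuous).integrable_of_hasCompactSupport
      (hgs.fderiv_apply (𝕜 := ℝ) v).mul_right
  · exact (hg.continuous.mul hf').integrable_of_hasCompactSupport hgs.mul_right
  · exact (hg.continuous.mul hf.continuous).integrable_of_hasCompactSupport hgs.mul_right

section pd

variable {f g : (Fin 3 → ℝ) → ℝ} {x : Fin 3 → ℝ}

theorem pd_mul (i : Fin 3) (hf : DifferentiableAt ℝ f x) (hg : DifferentiableAt ℝ g x) :
    pd i (fun y => f y * g y) x = pd i f x * g x + f x * pd i g x := by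
  simp [pd, fderiv_fun_mul hf hg]
  ring

theorem pd_sum {ι : Type*} (s : Finset ι) (i : Fin 3) {F : ι → (Fin 3 → ℝ) → ℝ}
    (hF : ∀ k ∈ s, DifferentiableAt ℝ (F k) x) :
    pd i (fun y => ∑ k ∈ s, F k y) x = ∑ k ∈ s, pd i (F k) x := by
  simp [pd, fderiv_fun_sum hF]

theorem pd_eq_zero_of_notMem_tsupport (i : Fin 3) (hx : x ∉ tsupport f) : pd i f x = 0 := by
  simp [pd, fderiv_of_notMem_tsupport ℝ hx]

theorem ContDiff.continuous_pd (i : Fin 3) (hf : ContDiff ℝ 1 f) : Continuous (pd i f) := by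
  unfold pd
  fun_prop

theorem ContDiff.contDiff_pd {n : WithTop ℕ∞} (i : Fin 3) (hf : ContDiff ℝ (n + 1) f) :
    ContDiff ℝ n (pd i f) :=
  (hf.fderiv_right le_rfl).clm_apply contDiff_const

theorem HasCompactSupport.pd (i : Fin 3) (hf : HasCompactSupport f) :
    HasCompactSupport (pd i f) :=
  hf.fderiv (𝕜 := ℝ) |>.comp_left
    (g := fun L : (Fin 3 → ℝ) →L[ℝ] ℝ => L (Pi.single i 1)) rfl

theorem pd_pd_comm (i j : Fin 3) (hf : ContDiff ℝ 2 f) :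
    pd i (pd j f) x = pd j (pd i f) x := by
  have hf' := (hf.fderiv_right (m := 1) (by norm_num)).differentiable one_ne_zero x
  change fderiv ℝ (fun y => fderiv ℝ f y (Pi.single j 1)) x (Pi.single i 1)
    = fderiv ℝ (fun y => fderiv ℝ f y (Pi.single i 1)) x (Pi.single j 1)
  simp only [fderiv_clm_apply hf' (differentiableAt_const _), fderiv_fun_const]
  simpa using hf.contDiffAt.isSymmSndFDerivAt (by simp) (Pi.single i 1) (Pi.single j 1)

end pd

noncomputable def grad (f : (Fin 3 → ℝ) → ℝ) (x : Fin 3 → ℝ) : EuclideanSpace ℝ (Fin 3) :=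
  WithLp.toLp 2 fun j => pd j f x

section grad

variable {f : (Fin 3 → ℝ) → ℝ}

theorem norm_grad (x : Fin 3 → ℝ) : ‖grad f x‖ = √(∑ j, (pd j f x) ^ 2) := by
  simp [grad, EuclideanSpace.norm_eq]

theorem grad_eq_comp :
    grad f = (PiLp.continuousLinearEquiv 2 ℝ fun _ : Fin 3 => ℝ).symm ∘ fun x j => pd j f x :=
  rfl

theorem contDiff_grad (hf : ContDiff ℝ 2 f) : ContDiff ℝ 1 (grad f) :=
  grad_eq_comp (f := f) ▸
    (PiLp.continuousLinearEquiv 2 ℝ _).symm.contDiff.comp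
      (contDiff_pi.2 fun j => hf.contDiff_pd (n := 1) j)

theorem hasFDerivAt_grad (hf : ContDiff ℝ 2 f) (x : Fin 3 → ℝ) :
    HasFDerivAt (grad f) ((PiLp.continuousLinearEquiv 2 ℝ _).symm.toContinuousLinearMap.comp
      (ContinuousLinearMap.pi fun j => fderiv ℝ (pd j f) x)) x := by
  have hpd : HasFDerivAt (fun y j => pd j f y)
      (ContinuousLinearMap.pi fun j => fderiv ℝ (pd j f) x) x :=
    hasFDerivAt_pi.2 fun j =>
      ((hf.contDiff_pd (n := 1) j).differentiable one_ne_zero x).hasFDerivAt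
  rw [grad_eq_comp]
  exact (PiLp.continuousLinearEquiv 2 ℝ _).symm.hasFDerivAt.comp x hpd

theorem pd_norm_grad_rpow (hf : ContDiff ℝ 2 f) {p : ℝ} (hp : 1 < p) (k : Fin 3)
    (x : Fin 3 → ℝ) :
    pd k (fun y => ‖grad f y‖ ^ p) x
      = p * ‖grad f x‖ ^ (p - 2) * ∑ j, pd k (pd j f) x * pd j f x := by
  have h : HasFDerivAt (fun y => ‖grad f y‖ ^ p) _ x :=
    (hasFDerivAt_norm_rpow (grad f x) hp).comp x (hasFDerivAt_grad hf x)
  rw [pd, h.fderiv]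
  simp only [ContinuousLinearMap.smul_comp, smul_apply, ContinuousLinearMap.comp_apply,
    ContinuousLinearMap.coe_pi', ContinuousLinearEquiv.coe_coe,
    PiLp.continuousLinearEquiv_symm_apply, coe_innerSL_apply, PiLp.inner_apply, grad,
    RCLike.inner_apply, conj_trivial, smul_eq_mul]
  rfl

end grad

theorem integral_sum_mul_pd_eq_neg {A : (Fin 3 → ℝ) → ℝ} {u : (Fin 3 → ℝ) → Fin 3 → ℝ}
    (hA : ContDiff ℝ 1 A) (hu : ContDiff ℝ 1 u) (hus : HasCompactSupport u) :
    ∫ x, ∑ k, u x k * pd k A x = -∫ x, A x * ∑ k, pd k (fun y => u y k) x := by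
  have huk : ∀ k, ContDiff ℝ 1 (fun y => u y k) := contDiff_pi.1 hu
  have husk : ∀ k, HasCompactSupport (fun y => u y k) := fun k =>
    hus.comp_left (g := fun v : Fin 3 → ℝ => v k) rfl
  rw [integral_finsetSum (f := fun k x => u x k * pd k A x) _ fun k _ =>
    ((huk k).continuous.mul (hA.continuous_pd k)).integrable_of_hasCompactSupport
      (husk k).mul_right]
  simp only [Finset.mul_sum]
  rw [integral_finsetSum (f := fun k x => A x * pd k (fun y => u y k) x) _ fun k _ =>
    (hA.continuous.mul ((huk k).continuous_pd k)).integrable_of_hasCompactSupport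
      ((husk k).pd k).mul_left, ← Finset.sum_neg_distrib]
  refine Finset.sum_congr rfl fun k _ => ?_
  simp only [mul_comm (A _)]
  exact integral_mul_fderiv_eq_neg_of_hasCompactSupport hA (huk k) (husk k) _

theorem sum_pd_dot_grad_mul_norm_rpow_eq {u : (Fin 3 → ℝ) → Fin 3 → ℝ}
    {φ : (Fin 3 → ℝ) → ℝ} {x : Fin 3 → ℝ} (hu : DifferentiableAt ℝ u x) (hφ : ContDiff ℝ 2 φ)
    {q : ℝ} (hq : 1 < q) :
    (∑ j, pd j (fun y => ∑ k, u y k * pd k φ y) x * pd j φ x) * ‖grad φ x‖ ^ (q - 2)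
      = (∑ j, ∑ k, pd j (fun y => u y k) x * pd k φ x * pd j φ x) * ‖grad φ x‖ ^ (q - 2)
        + q⁻¹ * ∑ k, u x k * pd k (fun y => ‖grad φ y‖ ^ q) x := by
  have huk : ∀ k, DifferentiableAt ℝ (fun y => u y k) x := differentiableAt_pi.1 hu
  have hσ : ∀ k, Differentiable ℝ (pd k φ) := fun k =>
    (hφ.contDiff_pd (n := 1) k).differentiable one_ne_zero
  have hprod : ∀ j, pd j (fun y => ∑ k, u y k * pd k φ y) x
      = ∑ k, (pd j (fun y => u y k) x * pd k φ x + u x k * pd j (pd k φ) x) := fun j => by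
    rw [pd_sum (F := fun k y => u y k * pd k φ y) _ _ fun k _ => (huk k).mul (hσ k x)]
    exact Finset.sum_congr rfl fun k _ => pd_mul j (huk k) (hσ k x)
  have hsymm : ∀ j k, pd k (pd j φ) x = pd j (pd k φ) x := fun j k => pd_pd_comm k j hφ
  simp only [hprod, pd_norm_grad_rpow hφ hq]
  simp only [hsymm, Fin.sum_univ_three]
  field_simp
  ring

/-- Integration-by-parts identity for gradient fields `σ = ∇φ` (key computation in Lemma 6.2):
`∫ ∇(u·σ)·σ |σ|^{q−2} dx = ∫ (Σ_{j,k} (∂_j u_k) σ_k σ_j) |σ|^{q−2} dx − (1/q)∫ |σ|^q div u dx`. -/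
theorem ibp_gradient_field_identity
    (q : ℝ) (hq : 2 ≤ q)
    (u : (Fin 3 → ℝ) → Fin 3 → ℝ) (φ : (Fin 3 → ℝ) → ℝ)
    (hu : ContDiff ℝ 1 u) (husupp : HasCompactSupport u)
    (hφ : ContDiff ℝ 2 φ) :
    (∫ x : Fin 3 → ℝ,
        (∑ j, pd j (fun y => ∑ k, u y k * pd k φ y) x * pd j φ x)
          * Real.sqrt (∑ j, (pd j φ x) ^ 2) ^ (q - 2))
      = (∫ x : Fin 3 → ℝ,
          (∑ j, ∑ k, pd j (fun y => u y k) x * pd k φ x * pd j φ x)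
            * Real.sqrt (∑ j, (pd j φ x) ^ 2) ^ (q - 2))
        - (1 / q) * ∫ x : Fin 3 → ℝ,
            Real.sqrt (∑ j, (pd j φ x) ^ 2) ^ q * (∑ j, pd j (fun y => u y j) x) := by
  have hq1 : 1 < q := by linarith
  have hA : ContDiff ℝ 1 fun y => ‖grad φ y‖ ^ q :=
    (contDiff_norm_rpow hq1).comp (contDiff_grad hφ)
  have hσ : ∀ k, Continuous (pd k φ) := fun k => (hφ.contDiff_pd (n := 1) k).continuous
  have hdu : ∀ j k, Continuous (pd j fun y => u y k) := fun j k =>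
    (contDiff_pi.1 hu k).continuous_pd j
  have hP : Continuous fun x => ‖grad φ x‖ ^ (q - 2) :=
    (contDiff_grad hφ).continuous.norm.rpow_const fun _ => Or.inr (by linarith)
  have hoff : ∀ x ∉ tsupport u, u x = 0 ∧ ∀ j k, pd j (fun y => u y k) x = 0 := fun x hx =>
    ⟨image_eq_zero_of_notMem_tsupport hx, fun j k => pd_eq_zero_of_notMem_tsupport j fun h =>
      hx (tsupport_comp_subset (g := fun v : Fin 3 → ℝ => v k) rfl _ h)⟩
  have hfirst : Integrable fun x =>
      (∑ j, ∑ k, pd j (fun y => u y k) x * pd k φ x * pd j φ x) * ‖grad φ x‖ ^ (q - 2) :=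
    Continuous.integrable_of_hasCompactSupport (by fun_prop) <|
      .intro husupp fun x hx => by simp [(hoff x hx).2]
  have hsecond : Integrable fun x => q⁻¹ * ∑ k, u x k * pd k (fun y => ‖grad φ y‖ ^ q) x :=
    Continuous.integrable_of_hasCompactSupport
      (by have := hA.continuous_pd; have := hu.continuous; fun_prop) <|
      .intro husupp fun x hx => by simp [(hoff x hx).1]
  simp only [← norm_grad]
  rw [integral_congr_ae (.of_forall fun x =>
      sum_pd_dot_grad_mul_norm_rpow_eq (hu.differentiable one_ne_zero x) hφ hq1),
    integral_add hfirst hsecond, integral_const_mul, integral_sum_mul_pd_eq_neg hA hu husupp]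
  ring
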